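/- For every integer k ≥ 0 and every α > 0, the quantity D_k(α) := J_k(α)(J_k'(α) + α J_k''(α)) − α (J_k'(α))² is strictly negative. In particular D_k has no positive root. -/

import Mathlib

open Real Set

/-- Bessel function of the first kind of integer order `k`, defined by its power series. -/
noncomputable def besselJ (k : ℕ) (x : ℝ) : ℝ :=
  ∑' m : ℕ, ((-1 : ℝ) ^ m / ((Nat.factorial m : ℝ) * (Nat.factorial (m + k) : ℝ))) *
    (x / 2) ^ (2 * m + k)

/-!
Multiplying `D_k(α)` by `α` and using Bessel's equation gives `α D_k(α) = -H(α)` with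
`H(x) = (x² - k²) J_k(x)² + x² J_k'(x)²`. Bessel's equation also gives `H' = 2x J_k²`, so `H` is
nondecreasing on `[0, ∞)` with `H(0) = 0`; it increases strictly near `0`, where
`J_k(x) ~ (x/2)^k / k!` is positive. Hence `H(α) > 0`.

The derivatives of `J_k` are obtained by differentiating its series termwise, as a series
`∑ a_m y^(e_m)` in `y = x/2`.
-/

noncomputable def monomialSeries (a : ℕ → ℝ) (e : ℕ → ℕ) (y : ℝ) : ℝ :=
  ∑' m, a m * y ^ e m

def derivCoeff (a : ℕ → ℝ) (e : ℕ → ℕ) (m : ℕ) : ℝ := a m * e m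

section MonomialSeries

variable {a : ℕ → ℝ} {e : ℕ → ℕ}

lemma abs_mul_pow_le_of_abs_le {c y R : ℝ} (n : ℕ) (h : |y| ≤ R) :
    |c * y ^ n| ≤ |c * R ^ n| := by
  rw [abs_mul, abs_mul, abs_pow, abs_pow]
  exact mul_le_mul_of_nonneg_left (pow_le_pow_left₀ (abs_nonneg y) (h.trans (le_abs_self R)) n)
    (abs_nonneg c)

lemma summable_derivCoeff (ha : ∀ y, Summable fun m => a m * y ^ e m) (y : ℝ) :
    Summable fun m => derivCoeff a e m * y ^ (e m - 1) := by
  refine .of_norm_bounded (ha (2 * (|y| + 1))).abs fun m => ?_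
  rw [Real.norm_eq_abs, derivCoeff, abs_mul, abs_mul, abs_mul (a m), abs_pow, abs_pow,
    Nat.abs_cast, abs_of_nonneg (by positivity : (0 : ℝ) ≤ 2 * (|y| + 1)), mul_pow, mul_assoc]
  gcongr
  · exact_mod_cast Nat.lt_two_pow_self.le
  · calc |y| ^ (e m - 1) ≤ (|y| + 1) ^ (e m - 1) := by gcongr; linarith
      _ ≤ (|y| + 1) ^ e m := pow_le_pow_right₀ (by linarith [abs_nonneg y]) (Nat.sub_le _ _)

/-- The exponent `e m - 1` truncates at `e m = 0`, but there the coefficient `a m * e m`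
vanishes. -/
theorem hasDerivAt_monomialSeries (ha : ∀ y, Summable fun m => a m * y ^ e m) (x : ℝ) :
    HasDerivAt (monomialSeries a e) (monomialSeries (derivCoeff a e) (e · - 1) x) x := by
  have hx : x ∈ Metric.ball (0 : ℝ) (|x| + 1) := by simp
  refine hasDerivAt_tsum_of_isPreconnected (g := fun m y => a m * y ^ e m)
    (g' := fun m y => derivCoeff a e m * y ^ (e m - 1)) (summable_derivCoeff ha (|x| + 1)).abs
    Metric.isOpen_ball (convex_ball 0 _).isPreconnected (fun m y _ => ?_) (fun m y hy => ?_)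
    hx (ha x) hx
  · simpa [derivCoeff, mul_assoc] using (hasDerivAt_pow (e m) y).const_mul (a m)
  · rw [Real.norm_eq_abs]
    exact abs_mul_pow_le_of_abs_le _ (mem_ball_zero_iff.mp hy).le

lemma deriv_monomialSeries (ha : ∀ y, Summable fun m => a m * y ^ e m) :
    deriv (monomialSeries a e) = monomialSeries (derivCoeff a e) (e · - 1) :=
  funext fun x => (hasDerivAt_monomialSeries ha x).deriv

lemma differentiable_monomialSeries (ha : ∀ y, Summable fun m => a m * y ^ e m) :
    Differentiable ℝ (monomialSeries a e) :=
  fun x => (hasDerivAt_monomialSeries ha x).differentiableAt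

end MonomialSeries

lemma sq_mul_pow_sub_two_add_mul_pow_sub_one (n : ℕ) (y : ℝ) :
    y ^ 2 * (n * (n - 1 : ℕ) * y ^ (n - 1 - 1)) + y * (n * y ^ (n - 1)) = n ^ 2 * y ^ n := by
  rcases n with _ | _ | n
  · simp
  · simp
  · simp only [Nat.add_sub_cancel]
    push_cast
    ring

lemma deriv_comp_div_two {f : ℝ → ℝ} (hf : Differentiable ℝ f) :
    deriv (fun x => f (x / 2)) = fun x => deriv f (x / 2) / 2 := by
  funext x
  have h := (hf (x / 2)).hasDerivAt.comp x ((hasDerivAt_id x).div_const 2)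
  rw [show (fun x => f (x / 2)) = f ∘ fun x => id x / 2 from rfl, h.deriv]
  ring

noncomputable def besselCoeff (k m : ℕ) : ℝ :=
  (-1 : ℝ) ^ m / ((Nat.factorial m : ℝ) * (Nat.factorial (m + k) : ℝ))

noncomputable def besselSeries (k : ℕ) : ℝ → ℝ := monomialSeries (besselCoeff k) (2 * · + k)

lemma besselJ_apply (k : ℕ) (x : ℝ) : besselJ k x = besselSeries k (x / 2) := rfl

lemma abs_besselCoeff_le (k m : ℕ) : |besselCoeff k m| ≤ 1 / (Nat.factorial m : ℝ) := by
  rw [besselCoeff, abs_div, abs_pow, abs_neg, abs_one, one_pow, abs_of_pos (by positivity)]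
  gcongr
  exact le_mul_of_one_le_right (by positivity) (by exact_mod_cast Nat.factorial_pos _)

lemma summable_besselCoeff_mul_pow_two_mul (k : ℕ) (y : ℝ) :
    Summable fun m => besselCoeff k m * y ^ (2 * m) := by
  refine .of_norm_bounded (Real.summable_pow_div_factorial (y ^ 2)) fun m => ?_
  rw [Real.norm_eq_abs, abs_mul, pow_mul, abs_of_nonneg (by positivity : (0 : ℝ) ≤ (y ^ 2) ^ m),
    ← one_div_mul_eq_div]
  exact mul_le_mul_of_nonneg_right (abs_besselCoeff_le k m) (by positivity)

lemma summable_besselCoeff_mul_pow (k : ℕ) (y : ℝ) :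
    Summable fun m => besselCoeff k m * y ^ (2 * m + k) :=
  ((summable_besselCoeff_mul_pow_two_mul k y).mul_right (y ^ k)).congr fun m => by ring

lemma besselCoeff_succ_mul (k m : ℕ) :
    besselCoeff k (m + 1) * (((2 * (m + 1) + k : ℕ) : ℝ) ^ 2 - k ^ 2) = -4 * besselCoeff k m := by
  rw [besselCoeff, besselCoeff, Nat.factorial_succ, show m + 1 + k = (m + k) + 1 by omega,
    Nat.factorial_succ]
  push_cast
  field_simp
  ring

/-- `y² S'' + y S' - k² S` has coefficients `c_m ((2m+k)² - k²)`, and the recurrence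
`besselCoeff_succ_mul` identifies this series, shifted by one index, with `-4 y² S`. -/
theorem besselSeries_ode (k : ℕ) (y : ℝ) :
    y ^ 2 * deriv (deriv (besselSeries k)) y + y * deriv (besselSeries k) y
      + (4 * y ^ 2 - k ^ 2) * besselSeries k y = 0 := by
  have hS := summable_besselCoeff_mul_pow k
  have hS1 := summable_derivCoeff hS
  have hS2 := summable_derivCoeff hS1
  obtain ⟨R, hR_def⟩ : ∃ R : ℕ → ℝ,
      R = fun m => besselCoeff k m * (((2 * m + k : ℕ) : ℝ) ^ 2 - k ^ 2) * y ^ (2 * m + k) :=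
    ⟨_, rfl⟩
  have hR : HasSum R (-4 * y ^ 2 * besselSeries k y) := by
    have hshift : HasSum (fun m => R (m + 1)) (-4 * y ^ 2 * besselSeries k y) := by
      have : (fun m => R (m + 1)) =
          fun m => -4 * y ^ 2 * (besselCoeff k m * y ^ (2 * m + k)) := by
        funext m
        simp only [hR_def]
        rw [besselCoeff_succ_mul]
        ring
      rw [this]
      exact (hS y).hasSum.mul_left _
    have h0 : R 0 = 0 := by simp [hR_def]
    simpa [h0] using hshift.zero_add
  have hL : HasSum R (y ^ 2 * deriv (deriv (besselSeries k)) y + y * deriv (besselSeries k) y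
      - k ^ 2 * besselSeries k y) := by
    have hterm : R = fun m =>
        y ^ 2 * (derivCoeff (derivCoeff (besselCoeff k) (2 * · + k)) (2 * · + k - 1) m
          * y ^ (2 * m + k - 1 - 1))
        + y * (derivCoeff (besselCoeff k) (2 * · + k) m * y ^ (2 * m + k - 1))
        - k ^ 2 * (besselCoeff k m * y ^ (2 * m + k)) := by
      funext m
      simp only [hR_def, derivCoeff]
      linear_combination -besselCoeff k m * sq_mul_pow_sub_two_add_mul_pow_sub_one (2 * m + k) y
    rw [hterm, besselSeries, deriv_monomialSeries hS, deriv_monomialSeries hS1]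
    exact (((hS2 y).hasSum.mul_left (y ^ 2)).add ((hS1 y).hasSum.mul_left y)).sub
      ((hS y).hasSum.mul_left ((k : ℝ) ^ 2))
  linear_combination hL.unique hR

lemma differentiable_besselSeries (k : ℕ) : Differentiable ℝ (besselSeries k) :=
  differentiable_monomialSeries (summable_besselCoeff_mul_pow k)

lemma differentiable_deriv_besselSeries (k : ℕ) : Differentiable ℝ (deriv (besselSeries k)) := by
  rw [besselSeries, deriv_monomialSeries (summable_besselCoeff_mul_pow k)]
  exact differentiable_monomialSeries (summable_derivCoeff (summable_besselCoeff_mul_pow k))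

lemma deriv_besselJ (k : ℕ) : deriv (besselJ k) = fun x => deriv (besselSeries k) (x / 2) / 2 :=
  deriv_comp_div_two (differentiable_besselSeries k)

lemma differentiable_besselJ (k : ℕ) : Differentiable ℝ (besselJ k) :=
  (differentiable_besselSeries k).comp (differentiable_id.div_const 2)

lemma differentiable_deriv_besselJ (k : ℕ) : Differentiable ℝ (deriv (besselJ k)) := by
  rw [deriv_besselJ]
  exact ((differentiable_deriv_besselSeries k).comp (differentiable_id.div_const 2)).div_const 2

lemma deriv_deriv_besselJ (k : ℕ) :
    deriv (deriv (besselJ k)) = fun x => deriv (deriv (besselSeries k)) (x / 2) / 4 := by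
  rw [deriv_besselJ]
  funext x
  rw [deriv_div_const, deriv_comp_div_two (differentiable_deriv_besselSeries k)]
  ring

theorem besselJ_ode (k : ℕ) (x : ℝ) :
    x ^ 2 * deriv (deriv (besselJ k)) x + x * deriv (besselJ k) x
      + (x ^ 2 - k ^ 2) * besselJ k x = 0 := by
  rw [deriv_deriv_besselJ, deriv_besselJ, besselJ_apply]
  linear_combination besselSeries_ode k (x / 2)

lemma besselSeries_eq_pow_mul (k : ℕ) (y : ℝ) :
    besselSeries k y = y ^ k * monomialSeries (besselCoeff k) (2 * ·) y := by
  rw [besselSeries, monomialSeries, monomialSeries, ← tsum_mul_left]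
  congr 1
  funext m
  ring

lemma monomialSeries_besselCoeff_zero (k : ℕ) :
    monomialSeries (besselCoeff k) (2 * ·) 0 = besselCoeff k 0 := by
  rw [monomialSeries, tsum_eq_single 0 fun m hm => by simp [hm]]
  simp

lemma exists_besselJ_pos (k : ℕ) : ∃ δ > 0, ∀ x ∈ Ioo 0 δ, 0 < besselJ k x := by
  have hT :=
    (differentiable_monomialSeries (summable_besselCoeff_mul_pow_two_mul k)).continuous
  have hT0 : 0 < monomialSeries (besselCoeff k) (2 * ·) 0 := by
    rw [monomialSeries_besselCoeff_zero, besselCoeff]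
    positivity
  obtain ⟨ε, hε, hpos⟩ := Metric.eventually_nhds_iff.mp
    (continuousAt_const.eventually_lt hT.continuousAt hT0)
  refine ⟨2 * ε, by positivity, fun x hx => ?_⟩
  rw [besselJ_apply, besselSeries_eq_pow_mul]
  have hx2 : dist (x / 2) 0 < ε := by
    rw [Real.dist_eq, sub_zero, abs_of_pos (by linarith [hx.1])]
    linarith [hx.2]
  have := hpos hx2
  have := hx.1
  positivity

noncomputable def besselH (k : ℕ) (x : ℝ) : ℝ :=
  (x ^ 2 - k ^ 2) * besselJ k x ^ 2 + x ^ 2 * deriv (besselJ k) x ^ 2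

lemma hasDerivAt_besselH (k : ℕ) (x : ℝ) :
    HasDerivAt (besselH k) (2 * x * besselJ k x ^ 2) x := by
  have hJ := (differentiable_besselJ k x).hasDerivAt
  have hJ' := (differentiable_deriv_besselJ k x).hasDerivAt
  refine ((((hasDerivAt_pow 2 x).sub_const ((k : ℝ) ^ 2)).mul (hJ.fun_pow 2)).add
    ((hasDerivAt_pow 2 x).mul (hJ'.fun_pow 2))).congr_deriv ?_
  push_cast
  linear_combination 2 * deriv (besselJ k) x * besselJ_ode k x

lemma besselH_zero (k : ℕ) : besselH k 0 = 0 := by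
  rcases k.eq_zero_or_pos with rfl | hk
  · simp [besselH]
  · have : besselJ k 0 = 0 := by
      rw [besselJ_apply, besselSeries_eq_pow_mul]
      simp [hk.ne']
    simp [besselH, this]

theorem besselH_pos (k : ℕ) {x : ℝ} (hx : 0 < x) : 0 < besselH k x := by
  obtain ⟨δ, hδ, hJ⟩ := exists_besselJ_pos k
  have hH := hasDerivAt_besselH k
  have hcont : Continuous (besselH k) :=
    continuous_iff_continuousAt.mpr fun t => (hH t).continuousAt
  set ε := min x (δ / 2)
  have hε : 0 < ε := lt_min hx (by positivity)
  have hmono : MonotoneOn (besselH k) (Ici 0) := by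
    refine monotoneOn_of_deriv_nonneg (convex_Ici 0) hcont.continuousOn
      (fun t _ => (hH t).differentiableAt.differentiableWithinAt) fun t ht => ?_
    rw [interior_Ici] at ht
    rw [(hH t).deriv]
    have : 0 < t := ht
    positivity
  have hstrict : StrictMonoOn (besselH k) (Icc 0 ε) := by
    refine strictMonoOn_of_deriv_pos (convex_Icc 0 ε) hcont.continuousOn fun t ht => ?_
    rw [interior_Icc] at ht
    rw [(hH t).deriv]
    have := hJ t ⟨ht.1, ht.2.trans_le ((min_le_right _ _).trans (by linarith))⟩
    have := ht.1
    positivity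
  calc 0 = besselH k 0 := (besselH_zero k).symm
    _ < besselH k ε := hstrict (left_mem_Icc.mpr hε.le) (right_mem_Icc.mpr hε.le) hε
    _ ≤ besselH k x := hmono (mem_Ici.mpr hε.le) (mem_Ici.mpr hx.le) (min_le_left _ _)

/-- `D_k(α) = J_k(α)(J_k'(α) + α J_k''(α)) − α J_k'(α)²` is strictly negative for all `α > 0`;
in particular it has no positive root. -/
theorem Dk_neg (k : ℕ) (α : ℝ) (hα : 0 < α) :
    besselJ k α * (deriv (besselJ k) α + α * deriv (deriv (besselJ k)) α)
      - α * (deriv (besselJ k) α) ^ 2 < 0 := by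
  have hD : α * (besselJ k α * (deriv (besselJ k) α + α * deriv (deriv (besselJ k)) α)
      - α * (deriv (besselJ k) α) ^ 2) = -besselH k α := by
    rw [besselH]
    linear_combination besselJ k α * besselJ_ode k α
  have hneg : α * _ < 0 := hD ▸ neg_neg_of_pos (besselH_pos k hα)
  exact neg_of_mul_neg_right hneg hα.le
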